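/- Let 𝓜 be a linear map from symmetric m×m real matrices to ℝ^n that is (k+1, δ)-RIP with δ ∈ [0,1), for some positive integer k. Then for every symmetric m×m matrix B of rank at most k, the spectral norm satisfies ‖(𝓜*𝓜 − 𝓘)(B)‖ ≤ δ·‖B‖_F. -/

import Mathlib

open Matrix MeasureTheory ProbabilityTheory BigOperators

noncomputable section

/-- Frobenius norm of a real matrix. -/
def frob {m n : ℕ} (M : Matrix (Fin m) (Fin n) ℝ) : ℝ :=
  Real.sqrt (∑ i, ∑ j, (M i j) ^ 2)

/-- Euclidean norm of a vector in `ℝⁿ`. -/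
def vnorm {n : ℕ} (v : Fin n → ℝ) : ℝ :=
  Real.sqrt (∑ i, (v i) ^ 2)

/-- Spectral norm (operator 2-norm) of a real matrix. -/
def spec {m n : ℕ} (M : Matrix (Fin m) (Fin n) ℝ) : ℝ :=
  ‖LinearMap.toContinuousLinearMap (Matrix.toEuclideanLin M)‖

theorem isHermitian_tmul {m n : ℕ} (M : Matrix (Fin m) (Fin n) ℝ) :
    (Mᵀ * M).IsHermitian := by
  simpa [Matrix.conjTranspose_eq_transpose_of_trivial] using
    Matrix.isHermitian_conjTranspose_mul_self M

theorem posSemidef_tmul {m n : ℕ} (M : Matrix (Fin m) (Fin n) ℝ) :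
    (Mᵀ * M).PosSemidef := by
  simpa [Matrix.conjTranspose_eq_transpose_of_trivial] using
    Matrix.posSemidef_conjTranspose_mul_self M

/-- The `i`-th largest singular value (1-indexed) of a real matrix, i.e. the square root of the
`i`-th largest eigenvalue of `MᵀM`; junk value `0` when `i` is out of range. -/
def svalue {m n : ℕ} (M : Matrix (Fin m) (Fin n) ℝ) (i : ℕ) : ℝ :=
  if h : 1 ≤ i ∧ i ≤ n then
    Real.sqrt ((isHermitian_tmul M).eigenvalues
      (Tuple.sort (isHermitian_tmul M).eigenvalues ⟨n - i, by omega⟩))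
  else 0

/-- Membership in the Stiefel manifold `St(m,r)`. -/
def Stiefel {m r : ℕ} (X : Matrix (Fin m) (Fin r) ℝ) : Prop :=
  Xᵀ * X = 1

/-- The Loewner order on (symmetric) real matrices: `A ⪯ B`. -/
def loewnerLE {m : ℕ} (A B : Matrix (Fin m) (Fin m) ℝ) : Prop :=
  (B - A).PosSemidef

/-- The inverse of the positive semidefinite square root of a matrix (junk value `0` when the
matrix is not positive semidefinite). -/
def sqrtInv {r : ℕ} (S : Matrix (Fin r) (Fin r) ℝ) : Matrix (Fin r) (Fin r) ℝ :=
  haveI := Classical.propDecidable S.PosSemidef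
  if h : S.PosSemidef then
    (h.1.eigenvectorUnitary.1 * diagonal ((RCLike.ofReal : ℝ → ℝ) ∘ Real.sqrt ∘ h.1.eigenvalues) *
      (star h.1.eigenvectorUnitary : Matrix (Fin r) (Fin r) ℝ))⁻¹ else 0

/-- The linear sensing map `𝓜` determined by feature matrices `M_i`:
`𝓜(B)_i = Tr(M_iᵀ B)`. -/
def calM {m n : ℕ} (Ms : Fin n → Matrix (Fin m) (Fin m) ℝ)
    (B : Matrix (Fin m) (Fin m) ℝ) : Fin n → ℝ :=
  fun i => ((Ms i)ᵀ * B).trace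

/-- The adjoint `𝓜*` of the sensing map: `𝓜*(y) = ∑ i, y_i M_i`. -/
def calMadj {m n : ℕ} (Ms : Fin n → Matrix (Fin m) (Fin m) ℝ)
    (y : Fin n → ℝ) : Matrix (Fin m) (Fin m) ℝ :=
  ∑ i, y i • Ms i

/-- `(𝓜*𝓜 − 𝓘)(B)`. -/
def calE {m n : ℕ} (Ms : Fin n → Matrix (Fin m) (Fin m) ℝ)
    (B : Matrix (Fin m) (Fin m) ℝ) : Matrix (Fin m) (Fin m) ℝ :=
  calMadj Ms (calM Ms B) - B

/-- The `(s, δ)`-restricted isometry property for the sensing map determined by `Ms`. -/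
def IsRIP {m n : ℕ} (Ms : Fin n → Matrix (Fin m) (Fin m) ℝ) (s : ℕ) (δ : ℝ) : Prop :=
  ∀ B : Matrix (Fin m) (Fin m) ℝ, B.IsSymm → B.rank ≤ s →
    (1 - δ) * frob B ^ 2 ≤ vnorm (calM Ms B) ^ 2 ∧
      vnorm (calM Ms B) ^ 2 ≤ (1 + δ) * frob B ^ 2

/-- The Riemannian gradient on the Stiefel manifold obtained from the Euclidean gradient `g`
at the point `X`. -/
def Rgrad {m r : ℕ} (X g : Matrix (Fin m) (Fin r) ℝ) : Matrix (Fin m) (Fin r) ℝ :=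
  (1 - X * Xᵀ) * g + (2⁻¹ : ℝ) • (X * (Xᵀ * g - gᵀ * X))

/-- One step of Riemannian gradient descent (with `μ = 2`) for the weight-normalized
matrix sensing problem. -/
def RGDstep {m r n : ℕ} (Ms : Fin n → Matrix (Fin m) (Fin m) ℝ)
    (A : Matrix (Fin m) (Fin m) ℝ) (η : ℝ)
    (p : Matrix (Fin m) (Fin r) ℝ × Matrix (Fin r) (Fin r) ℝ) :
    Matrix (Fin m) (Fin r) ℝ × Matrix (Fin r) (Fin r) ℝ :=
  let X := p.1
  let Θ := p.2
  let Gt := calMadj Ms (calM Ms (X * Θ * Xᵀ - A)) * X * Θ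
  let G := Rgrad X Gt
  let X' := (X - η • G) * sqrtInv (1 + η ^ 2 • (Gᵀ * G))
  let Θ' := X'ᵀ * A * X' - X'ᵀ * calE Ms (X' * Θ * X'ᵀ - A) * X'
  (X', Θ')

/-- The standard Gaussian ensemble on `m × r` real matrices (i.i.d. `N(0,1)` entries). -/
def gaussianEnsemble (m r : ℕ) : Measure (Fin m → Fin r → ℝ) :=
  Measure.pi fun _ : Fin m => Measure.pi fun _ : Fin r => gaussianReal 0 1

end

/-!
Since `E := (𝓜*𝓜 − 𝓘)(B)` is symmetric, its spectral norm is the supremum of `|xᵀ E x|` over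
unit vectors `x`, and `xᵀ E x = ⟨𝓜 B, 𝓜 (x xᵀ)⟩ − ⟨B, x xᵀ⟩`. The matrices `B ± t x xᵀ` have rank
at most `k + 1`, so the RIP controls `‖𝓜(B ± t x xᵀ)‖² − ‖B ± t x xᵀ‖_F²`; polarizing with
`t = ‖B‖_F / ‖x xᵀ‖_F` bounds `|xᵀ E x|` by `δ ‖B‖_F ‖x xᵀ‖_F = δ ‖B‖_F ‖x‖²`.
-/

noncomputable section

open scoped RealInnerProductSpace

theorem ContinuousLinearMap.norm_le_of_abs_inner_self_le {E : Type*} [NormedAddCommGroup E]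
    [InnerProductSpace ℝ E] (T : E →L[ℝ] E) (hT : (T : E →ₗ[ℝ] E).IsSymmetric) {c : ℝ}
    (hc : 0 ≤ c) (h : ∀ x, |⟪T x, x⟫| ≤ c * ‖x‖ ^ 2) : ‖T‖ ≤ c := by
  rw [T.norm_eq_iSup_rayleighQuotient hT]
  refine ciSup_le fun x => ?_
  rcases eq_or_ne x 0 with rfl | hx
  · simpa using hc
  rw [rayleighQuotient, reApplyInnerSelf_apply, abs_div, abs_sq, div_le_iff₀ (by positivity)]
  exact h x

theorem norm_add_smul_sq_real {E : Type*} [NormedAddCommGroup E] [InnerProductSpace ℝ E]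
    (x y : E) (t : ℝ) : ‖x + t • y‖ ^ 2 = ‖x‖ ^ 2 + 2 * t * ⟪x, y⟫ + t ^ 2 * ‖y‖ ^ 2 := by
  rw [norm_add_sq_real, inner_smul_right, norm_smul, mul_pow, Real.norm_eq_abs, sq_abs]
  ring

theorem abs_inner_map_sub_inner_le {V W : Type*} [NormedAddCommGroup V] [InnerProductSpace ℝ V]
    [NormedAddCommGroup W] [InnerProductSpace ℝ W] (A : V →ₗ[ℝ] W) {δ : ℝ} {b c : V}
    (h : ∀ t : ℝ, |‖A (b + t • c)‖ ^ 2 - ‖b + t • c‖ ^ 2| ≤ δ * ‖b + t • c‖ ^ 2) :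
    |⟪A b, A c⟫ - ⟪b, c⟫| ≤ δ * ‖b‖ * ‖c‖ := by
  rcases eq_or_ne b 0 with rfl | hb
  · simp
  rcases eq_or_ne c 0 with rfl | hc
  · simp
  set t := ‖b‖ / ‖c‖
  have ht : 0 < t := by positivity
  have htc : t * ‖c‖ = ‖b‖ := div_mul_cancel₀ _ (norm_ne_zero_iff.mpr hc)
  have hplus := h t
  have hminus := h (-t)
  simp only [map_add, map_smul, norm_add_smul_sq_real] at hplus hminus
  -- The deviations at `b ± t c` differ by `4 t (⟪A b, A c⟫ - ⟪b, c⟫)` and their bounds add up to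
  -- `2 δ (‖b‖² + t² ‖c‖²) = 4 δ ‖b‖² = 4 t δ ‖b‖ ‖c‖`.
  have hsq : δ * (t ^ 2 * ‖c‖ ^ 2) = δ * ‖b‖ ^ 2 := by rw [← htc]; ring
  have hbc : δ * ‖b‖ * (t * ‖c‖) = δ * ‖b‖ * ‖b‖ := by rw [htc]
  rw [abs_le] at hplus hminus ⊢
  constructor
  · refine le_of_mul_le_mul_left ?_ ht
    linarith [hplus.1, hminus.2]
  · refine le_of_mul_le_mul_left ?_ ht
    linarith [hplus.2, hminus.1]

theorem Matrix.rank_add_le {K m n : Type*} [Field K] [Fintype n] (A B : Matrix m n K) :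
    (A + B).rank ≤ A.rank + B.rank := by
  have h : LinearMap.range (A + B).mulVecLin ≤
      LinearMap.range A.mulVecLin ⊔ LinearMap.range B.mulVecLin := by
    rintro _ ⟨x, rfl⟩
    rw [Matrix.mulVecLin_add]
    exact Submodule.add_mem_sup ⟨x, rfl⟩ ⟨x, rfl⟩
  exact (Submodule.finrank_mono h).trans (Submodule.finrank_add_le_finrank_add_finrank _ _)

theorem Matrix.rank_smul_le {R m n : Type*} [CommRing R] [StrongRankCondition R] [Fintype n]
    (t : R) (A : Matrix m n R) : (t • A).rank ≤ A.rank := by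
  have h : (t • A).mulVecLin = t • A.mulVecLin := by ext; simp
  exact Submodule.finrank_mono (h ▸ LinearMap.range_smul_le_range _ _)

section FrobeniusFlat

variable {ι κ : Type*}

def frobFlat : Matrix ι κ ℝ ≃ₗ[ℝ] EuclideanSpace ℝ (ι × κ) where
  toFun B := WithLp.toLp 2 fun p => B p.1 p.2
  invFun x := Matrix.of fun i j => x (i, j)
  map_add' _ _ := rfl
  map_smul' _ _ := rfl
  left_inv _ := rfl
  right_inv _ := rfl

@[simp]
theorem frobFlat_apply (B : Matrix ι κ ℝ) (p : ι × κ) : frobFlat B p = B p.1 p.2 := rfl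

variable [Fintype ι] [Fintype κ]

theorem inner_frobFlat (B C : Matrix ι κ ℝ) :
    ⟪frobFlat B, frobFlat C⟫ = ∑ i, ∑ j, B i j * C i j := by
  simp [EuclideanSpace.inner_eq_star_dotProduct, dotProduct, Fintype.sum_prod_type, mul_comm]

theorem norm_frobFlat_vecMulVec (v : EuclideanSpace ℝ ι) (w : EuclideanSpace ℝ κ) :
    ‖frobFlat (vecMulVec v w)‖ = ‖v‖ * ‖w‖ := by
  simp only [EuclideanSpace.norm_eq, frobFlat_apply, vecMulVec_apply, norm_mul, Real.norm_eq_abs,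
    mul_pow, sq_abs, Fintype.sum_prod_type, ← Finset.sum_mul_sum]
  exact Real.sqrt_mul (by positivity) _

theorem inner_toEuclideanLin_self [DecidableEq ι] (D : Matrix ι ι ℝ) (x : EuclideanSpace ℝ ι) :
    ⟪D.toEuclideanLin x, x⟫ = ⟪frobFlat D, frobFlat (vecMulVec x x)⟫ := by
  rw [inner_frobFlat]
  simp only [EuclideanSpace.inner_eq_star_dotProduct, dotProduct, ofLp_toLpLin, toLin'_apply,
    Pi.star_apply, mulVec, star_trivial, Finset.mul_sum, vecMulVec_apply]
  exact Finset.sum_congr rfl fun i _ => Finset.sum_congr rfl fun j _ => by ring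

end FrobeniusFlat

theorem norm_frobFlat {m n : ℕ} (B : Matrix (Fin m) (Fin n) ℝ) : ‖frobFlat B‖ = frob B := by
  simp [EuclideanSpace.norm_eq, frob, Fintype.sum_prod_type]

section Sensing

variable {m n : ℕ}

def sensingMap (Ms : Fin n → Matrix (Fin m) (Fin m) ℝ) :
    Matrix (Fin m) (Fin m) ℝ →ₗ[ℝ] EuclideanSpace ℝ (Fin n) where
  toFun B := WithLp.toLp 2 (calM Ms B)
  map_add' B C := by ext; simp [calM, Matrix.mul_add]
  map_smul' c B := by ext; simp [calM]

theorem norm_sensingMap (Ms : Fin n → Matrix (Fin m) (Fin m) ℝ) (B : Matrix (Fin m) (Fin m) ℝ) :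
    ‖sensingMap Ms B‖ = vnorm (calM Ms B) := by
  simp [sensingMap, EuclideanSpace.norm_eq, vnorm]

theorem calM_apply_eq_inner (Ms : Fin n → Matrix (Fin m) (Fin m) ℝ)
    (C : Matrix (Fin m) (Fin m) ℝ) (l : Fin n) :
    calM Ms C l = ⟪frobFlat (Ms l), frobFlat C⟫ := by
  simp only [calM, inner_frobFlat, trace, diag, mul_apply, transpose_apply]
  exact Finset.sum_comm

theorem inner_frobFlat_calMadj (Ms : Fin n → Matrix (Fin m) (Fin m) ℝ) (y : Fin n → ℝ)
    (C : Matrix (Fin m) (Fin m) ℝ) :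
    ⟪frobFlat (calMadj Ms y), frobFlat C⟫ = ⟪WithLp.toLp 2 y, sensingMap Ms C⟫ := by
  simp [calMadj, sum_inner, inner_smul_left, EuclideanSpace.inner_eq_star_dotProduct, sensingMap,
    dotProduct, calM_apply_eq_inner, mul_comm]

theorem inner_toEuclideanLin_calE_self (Ms : Fin n → Matrix (Fin m) (Fin m) ℝ)
    (B : Matrix (Fin m) (Fin m) ℝ) (x : EuclideanSpace ℝ (Fin m)) :
    ⟪(calE Ms B).toEuclideanLin x, x⟫ =
      ⟪sensingMap Ms B, sensingMap Ms (vecMulVec x x)⟫ -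
        ⟪frobFlat B, frobFlat (vecMulVec x x)⟫ := by
  rw [inner_toEuclideanLin_self, calE, map_sub, inner_sub_left, inner_frobFlat_calMadj]
  rfl

theorem isSymm_calE {Ms : Fin n → Matrix (Fin m) (Fin m) ℝ} (hMs : ∀ i, (Ms i).IsSymm)
    {B : Matrix (Fin m) (Fin m) ℝ} (hB : B.IsSymm) : (calE Ms B).IsSymm := by
  refine IsSymm.sub ?_ hB
  simp only [IsSymm, calMadj, transpose_sum, transpose_smul, (hMs _).eq]

theorem IsRIP.abs_sq_sub_le {s : ℕ} {Ms : Fin n → Matrix (Fin m) (Fin m) ℝ} {δ : ℝ}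
    (hRIP : IsRIP Ms s δ) {D : Matrix (Fin m) (Fin m) ℝ} (hD : D.IsSymm) (hDr : D.rank ≤ s) :
    |‖sensingMap Ms D‖ ^ 2 - ‖frobFlat D‖ ^ 2| ≤ δ * ‖frobFlat D‖ ^ 2 := by
  obtain ⟨hlower, hupper⟩ := hRIP D hD hDr
  rw [norm_sensingMap, norm_frobFlat, abs_le]
  constructor <;> linarith

theorem IsRIP.abs_inner_sub_le {r s : ℕ} {Ms : Fin n → Matrix (Fin m) (Fin m) ℝ} {δ : ℝ}
    (hRIP : IsRIP Ms (r + s) δ) {B C : Matrix (Fin m) (Fin m) ℝ} (hB : B.IsSymm)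
    (hBr : B.rank ≤ r) (hC : C.IsSymm) (hCr : C.rank ≤ s) :
    |⟪sensingMap Ms B, sensingMap Ms C⟫ - ⟪frobFlat B, frobFlat C⟫| ≤ δ * frob B * frob C := by
  have h := abs_inner_map_sub_inner_le (sensingMap Ms ∘ₗ frobFlat.symm.toLinearMap)
    (b := frobFlat B) (c := frobFlat C) (δ := δ) fun t => by
      rw [← map_smul, ← map_add]
      simpa using hRIP.abs_sq_sub_le (hB.add (hC.smul t))
        ((rank_add_le _ _).trans (add_le_add hBr ((rank_smul_le _ _).trans hCr)))
  simpa [norm_frobFlat] using h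

end Sensing

theorem stmt13_general {m n k : ℕ}
    (Ms : Fin n → Matrix (Fin m) (Fin m) ℝ) (hMs : ∀ i, (Ms i).IsSymm)
    (δ : ℝ) (hδ0 : 0 ≤ δ) (hRIP : IsRIP Ms (k + 1) δ)
    (B : Matrix (Fin m) (Fin m) ℝ) (hBsym : B.IsSymm) (hBr : B.rank ≤ k) :
    spec (calE Ms B) ≤ δ * frob B := by
  have hE : (calE Ms B).IsHermitian := by
    rw [IsHermitian, conjTranspose_eq_transpose_of_trivial]
    exact (isSymm_calE hMs hBsym).eq
  refine ContinuousLinearMap.norm_le_of_abs_inner_self_le _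
    (isSymmetric_toEuclideanLin_iff.mpr hE) (mul_nonneg hδ0 (Real.sqrt_nonneg _)) fun x => ?_
  rw [LinearMap.coe_toContinuousLinearMap', inner_toEuclideanLin_calE_self]
  calc _ ≤ δ * frob B * frob (vecMulVec x x) :=
        hRIP.abs_inner_sub_le hBsym hBr (transpose_vecMulVec _ _) (rank_vecMulVec_le _ _)
    _ = δ * frob B * ‖x‖ ^ 2 := by
      rw [← norm_frobFlat (vecMulVec x x), norm_frobFlat_vecMulVec, sq]

theorem stmt13 {m n k : ℕ} (hk : 1 ≤ k)
    (Ms : Fin n → Matrix (Fin m) (Fin m) ℝ) (hMs : ∀ i, (Ms i).IsSymm)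
    (δ : ℝ) (hδ0 : 0 ≤ δ) (hδ1 : δ < 1) (hRIP : IsRIP Ms (k + 1) δ)
    (B : Matrix (Fin m) (Fin m) ℝ) (hBsym : B.IsSymm) (hBr : B.rank ≤ k) :
    spec (calE Ms B) ≤ δ * frob B :=
  stmt13_general Ms hMs δ hδ0 hRIP B hBsym hBr

end
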